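/- arXiv:2604.24392 — 4 statements merged into one kernel-verified Lean document; each statement's English description precedes it below -/
import Mathlib

section
/- Let d, d' ≥ 1 and let f : ℝ^d × ℝ^{d'} × ℝ^{d'×d} → ℝ^{d'} satisfy: (i) |f(x,y,z) − f(x,y',z')| ≤ K_y·|y − y'| + K_z·‖z − z'‖ for all x ∈ ℝ^d, y, y' ∈ ℝ^{d'}, z, z' ∈ ℝ^{d'×d}; and (ii) ⟨f(x,y,z) − f(x,y',z), y − y'⟩ ≤ −μ·|y − y'|² for all x, y, y', z, where 0 ≤ μ ≤ K_y. Then for every a ≥ 0 and all x ∈ ℝ^d, y, y' ∈ ℝ^{d'}, z, z' ∈ ℝ^{d'×d}: |f(x,y,z) + a·y − f(x,y',z') − a·y'| ≤ √(K_y² − 2μa + a²)·|y − y'| + K_z·‖z − z'‖. -/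
/-!
Split the difference at the intermediate point `f x y' z`. The `z`-part is controlled by the
Lipschitz bound in `z`. For the `y`-part `v + a • w` with `v = f x y z - f x y' z`, `w = y - y'`,
expand `‖v + a • w‖² = ‖v‖² + 2a⟪v, w⟫ + a²‖w‖²` and bound the three terms by the Lipschitz
constant, the monotonicity constant and `a²`.
-/

open scoped RealInnerProductSpace

lemma norm_add_smul_le_sqrt_mul_norm {E : Type*} [NormedAddCommGroup E] [InnerProductSpace ℝ E]
    {v w : E} {K μ a : ℝ} (ha : 0 ≤ a) (hv : ‖v‖ ≤ K * ‖w‖) (hvw : ⟪v, w⟫ ≤ -μ * ‖w‖ ^ 2) :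
    ‖v + a • w‖ ≤ Real.sqrt (K ^ 2 - 2 * μ * a + a ^ 2) * ‖w‖ := by
  have hsq : ‖v + a • w‖ ^ 2 ≤ (K ^ 2 - 2 * μ * a + a ^ 2) * ‖w‖ ^ 2 := by
    rw [norm_add_sq_real, norm_smul, real_inner_smul_right, Real.norm_of_nonneg ha]
    have hv2 : ‖v‖ ^ 2 ≤ (K * ‖w‖) ^ 2 := pow_le_pow_left₀ (norm_nonneg v) hv 2
    nlinarith [mul_le_mul_of_nonneg_left hvw ha]
  calc ‖v + a • w‖ = Real.sqrt (‖v + a • w‖ ^ 2) := (Real.sqrt_sq (norm_nonneg _)).symm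
    _ ≤ Real.sqrt ((K ^ 2 - 2 * μ * a + a ^ 2) * ‖w‖ ^ 2) := Real.sqrt_le_sqrt hsq
    _ = Real.sqrt (K ^ 2 - 2 * μ * a + a ^ 2) * ‖w‖ := by
      rw [Real.sqrt_mul' _ (sq_nonneg _), Real.sqrt_sq (norm_nonneg _)]

theorem lipschitz_shift_generator_general
    (d d' : ℕ)
    (f : EuclideanSpace ℝ (Fin d) → EuclideanSpace ℝ (Fin d') →
         (EuclideanSpace ℝ (Fin d) →L[ℝ] EuclideanSpace ℝ (Fin d')) →
         EuclideanSpace ℝ (Fin d'))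
    (Ky Kz μ : ℝ)
    (hLip : ∀ x y y' z z', ‖f x y z - f x y' z'‖ ≤ Ky * ‖y - y'‖ + Kz * ‖z - z'‖)
    (hMono : ∀ x y y' z, ⟪f x y z - f x y' z, y - y'⟫ ≤ -μ * ‖y - y'‖ ^ 2)
    (a : ℝ) (ha : 0 ≤ a) :
    ∀ x y y' z z', ‖f x y z + a • y - (f x y' z' + a • y')‖ ≤
      Real.sqrt (Ky ^ 2 - 2 * μ * a + a ^ 2) * ‖y - y'‖ + Kz * ‖z - z'‖ := by
  intro x y y' z z'
  have hy : ‖f x y z - f x y' z‖ ≤ Ky * ‖y - y'‖ := by simpa using hLip x y y' z z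
  have hz : ‖f x y' z - f x y' z'‖ ≤ Kz * ‖z - z'‖ := by simpa using hLip x y' y' z z'
  have hsplit : f x y z + a • y - (f x y' z' + a • y') =
      (f x y z - f x y' z + a • (y - y')) + (f x y' z - f x y' z') := by
    rw [smul_sub]; abel
  rw [hsplit]
  exact (norm_add_le _ _).trans
    (add_le_add (norm_add_smul_le_sqrt_mul_norm ha hy (hMono x y y' z)) hz)

/-- If `f(x,y,z)` is `K_y`-Lipschitz in `y`, `K_z`-Lipschitz in `z` (matrix `2`-norm, i.e.
operator norm of the associated linear map `ℝ^d → ℝ^{d'}`) and `(−μ)`-monotone in `y` with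
`0 ≤ μ ≤ K_y`, then for every `a ≥ 0`,
`|f(x,y,z) + a·y − f(x,y',z') − a·y'| ≤ √(K_y² − 2μa + a²)|y − y'| + K_z‖z − z'‖`. -/
theorem lipschitz_shift_generator
    (d d' : ℕ) (hd : 1 ≤ d) (hd' : 1 ≤ d')
    (f : EuclideanSpace ℝ (Fin d) → EuclideanSpace ℝ (Fin d') →
         (EuclideanSpace ℝ (Fin d) →L[ℝ] EuclideanSpace ℝ (Fin d')) →
         EuclideanSpace ℝ (Fin d'))
    (Ky Kz μ : ℝ) (hμ0 : 0 ≤ μ) (hμK : μ ≤ Ky)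
    (hLip : ∀ x y y' z z', ‖f x y z - f x y' z'‖ ≤ Ky * ‖y - y'‖ + Kz * ‖z - z'‖)
    (hMono : ∀ x y y' z, ⟪f x y z - f x y' z, y - y'⟫ ≤ -μ * ‖y - y'‖ ^ 2)
    (a : ℝ) (ha : 0 ≤ a) :
    ∀ x y y' z z', ‖f x y z + a • y - (f x y' z' + a • y')‖ ≤
      Real.sqrt (Ky ^ 2 - 2 * μ * a + a ^ 2) * ‖y - y'‖ + Kz * ‖z - z'‖ :=
  lipschitz_shift_generator_general d d' f Ky Kz μ hLip hMono a ha
end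

section
/- Let r' ≥ 0 and C₀ ≥ 0, and let φ : ℝ^d → ℝ^m be twice continuously differentiable with ‖∇²φ(x)‖ ≤ C₀·(1 + |x|^{r'}) for all x ∈ ℝ^d. Then there exists a constant C ≥ 0, depending only on d, m, r' and C₀ (in particular not on the grid), such that for every mesh size δ > 0 and every box subgrid Π of δℤ^d with convex hull Box: sup_{x∈Box} ‖Pφ(x) − φ(x)‖/(1 + |x|^{r'}) ≤ C·δ²·(1 + δ^{r'}). -/
noncomputable section

/-- The grid point `δ·k` of `δℤ^d`, viewed in `ℝ^d`. -/
def gridPt (d : ℕ) (δ : ℝ) (k : Fin d → ℤ) : EuclideanSpace ℝ (Fin d) :=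
  WithLp.toLp 2 (fun i => δ * k i)

/-- The metric projection of `x ∈ ℝ^d` onto the closed convex box
`Box = ∏_i [δ m_i, δ M_i]` (for the Euclidean norm it is the coordinatewise clamp). -/
def boxProj (d : ℕ) (δ : ℝ) (mlo Mhi : Fin d → ℤ) (x : EuclideanSpace ℝ (Fin d)) :
    EuclideanSpace ℝ (Fin d) :=
  WithLp.toLp 2 (fun i => max (δ * mlo i) (min (x i) (δ * Mhi i)))

/-- The hat basis function `ψ_z(x) = ∏_i max(0, 1 − |x_i − z_i|/δ)`. -/
def hatFn (d : ℕ) (δ : ℝ) (z x : EuclideanSpace ℝ (Fin d)) : ℝ :=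
  ∏ i, max 0 (1 - |x i - z i| / δ)

/-- The multilinear interpolation operator
`Pφ(x) = Σ_{z∈Π} ψ_z(Proj(x, Box)) φ(z)` on the box subgrid `Π = {δk : m ≤ k ≤ M}`. -/
def interp {E : Type*} [AddCommGroup E] [Module ℝ E]
    (d : ℕ) (δ : ℝ) (mlo Mhi : Fin d → ℤ)
    (φ : EuclideanSpace ℝ (Fin d) → E) (x : EuclideanSpace ℝ (Fin d)) : E :=
  ∑ k ∈ Finset.Icc mlo Mhi,
    hatFn d δ (gridPt d δ k) (boxProj d δ mlo Mhi x) • φ (gridPt d δ k)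

/-!
On the box the projection is the identity, and the hat functions form a partition of unity that
reproduces affine functions: in rescaled coordinates they are products of one-dimensional tents,
so both facts reduce to one coordinate. Hence
`Pφ(x) - φ(x) = Σ_z ψ_z(x) (φ(z) - φ(x) - Dφ(x)(z - x))` is a convex combination of first-order
Taylor remainders at grid points with `|z - x| ≤ √d δ`, each bounded by
`d δ² · sup ‖∇²φ‖` over that ball, where the growth bound gives
`C₀ (1 + (|x| + √d δ)^{r'}) ≤ C₀ 2^{r'} (1 + √d^{r'}) (1 + |x|^{r'}) (1 + δ^{r'})`.
-/

open Finset

def tent (t : ℝ) : ℝ := max 0 (1 - |t|)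

theorem tent_eq_zero_of_one_le_abs {t : ℝ} (h : 1 ≤ |t|) : tent t = 0 :=
  max_eq_left (by linarith)

theorem abs_lt_one_of_tent_ne_zero {t : ℝ} (h : tent t ≠ 0) : |t| < 1 := by
  by_contra! h'
  exact h (tent_eq_zero_of_one_le_abs h')

theorem sum_tent_mul_of_pair_subset {S : Finset ℤ} {n : ℤ} (hS : {n, n + 1} ⊆ S) {t : ℝ}
    (hn : n ≤ t) (hn' : t ≤ n + 1) (g : ℤ → ℝ) :
    ∑ k ∈ S, tent (t - k) * g k = (n + 1 - t) * g n + (t - n) * g (n + 1) := by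
  have hvanish : ∀ k ∈ S, k ∉ ({n, n + 1} : Finset ℤ) → tent (t - k) * g k = 0 := by
    intro k _ hk
    simp only [mem_insert, mem_singleton, not_or] at hk
    rw [tent_eq_zero_of_one_le_abs, zero_mul]
    rcases lt_or_gt_of_ne hk.1 with hlt | hgt
    · have : (k : ℝ) + 1 ≤ n := by exact_mod_cast hlt
      rw [abs_of_nonneg (by linarith)]; linarith
    · have : (n : ℝ) + 2 ≤ k := by exact_mod_cast (show n + 2 ≤ k by omega)
      rw [abs_of_nonpos (by linarith)]; linarith
  rw [← sum_subset hS hvanish, sum_pair (by omega), tent, tent, abs_of_nonneg (by linarith),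
    abs_of_nonpos (by push_cast; linarith), max_eq_right (by linarith),
    max_eq_right (by push_cast; linarith)]
  push_cast
  ring

theorem sum_Icc_tent_mul {m M : ℤ} {t : ℝ} (hm : m ≤ t) (hM : t ≤ M) (g : ℤ → ℝ) :
    ∑ k ∈ Icc m M, tent (t - k) * g k
      = (⌊t⌋ + 1 - t) * g ⌊t⌋ + (t - ⌊t⌋) * g (⌊t⌋ + 1) := by
  have hm' : m ≤ ⌊t⌋ := Int.le_floor.mpr hm
  have hM' : ⌊t⌋ ≤ M := Int.floor_le_iff.mpr (by linarith)
  have hextra : ∀ k ∈ Icc m (M + 1), k ∉ Icc m M → tent (t - k) * g k = 0 := by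
    intro k hk hk'
    simp only [mem_Icc] at hk hk'
    have : (M : ℝ) + 1 ≤ k := by exact_mod_cast (show M + 1 ≤ k by omega)
    rw [tent_eq_zero_of_one_le_abs, zero_mul]
    rw [abs_of_nonpos (by linarith)]; linarith
  -- `⌊t⌋ + 1` may be `M + 1`, whose tent vanishes on `t ≤ M`.
  rw [sum_subset (Icc_subset_Icc_right (by omega)) hextra]
  refine sum_tent_mul_of_pair_subset ?_ (Int.floor_le t) (Int.lt_floor_add_one t).le g
  intro k hk
  simp only [mem_insert, mem_singleton] at hk
  rcases hk with rfl | rfl <;> simp only [mem_Icc] <;> omega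

theorem sum_Icc_tent {m M : ℤ} {t : ℝ} (hm : m ≤ t) (hM : t ≤ M) :
    ∑ k ∈ Icc m M, tent (t - k) = 1 := by
  have h := sum_Icc_tent_mul hm hM 1
  simp only [Pi.one_apply, mul_one] at h
  rw [h]
  ring

theorem sum_Icc_tent_mul_sub {m M : ℤ} {t : ℝ} (hm : m ≤ t) (hM : t ≤ M) :
    ∑ k ∈ Icc m M, tent (t - k) * (k - t) = 0 := by
  rw [sum_Icc_tent_mul hm hM (fun k => (k : ℝ) - t)]
  push_cast
  ring

theorem sum_piFinset_prod_mul_eq_zero {ι α R : Type*} [Fintype ι] [DecidableEq ι]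
    [CommSemiring R] (s : ι → Finset α) (f : ι → α → R) (g : α → R) {j : ι}
    (h : ∑ a ∈ s j, f j a * g a = 0) :
    ∑ k ∈ Fintype.piFinset s, (∏ i, f i (k i)) * g (k j) = 0 := by
  -- Absorbing `g` into the `j`-th factor makes the sum factor over coordinates.
  set f' := Function.update f j fun a => f j a * g a
  have hf' : ∀ k : ι → α, (∏ i, f i (k i)) * g (k j) = ∏ i, f' i (k i) := by
    intro k
    rw [← mul_prod_erase _ _ (mem_univ j), ← mul_prod_erase _ (fun i => f' i (k i)) (mem_univ j),
      prod_congr rfl fun i hi =>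
        (congrFun (Function.update_of_ne (ne_of_mem_erase hi) _ f) (k i)).symm]
    simp only [f', Function.update_self]
    ring
  simp_rw [hf', ← prod_univ_sum]
  exact prod_eq_zero (mem_univ j) (by simpa [f'] using h)

section Taylor

variable {E F : Type*} [NormedAddCommGroup E] [NormedSpace ℝ E]
  [NormedAddCommGroup F] [NormedSpace ℝ F]

theorem norm_fderiv_fderiv (f : E → F) (y : E) :
    ‖fderiv ℝ (fderiv ℝ f) y‖ = ‖iteratedFDeriv ℝ 2 f y‖ := by
  rw [← norm_iteratedFDeriv_fderiv (n := 1), norm_iteratedFDeriv_one]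

theorem norm_sub_sub_fderiv_apply_le {f : E → F} (hf : ContDiff ℝ 2 f) {x z : E} {R B : ℝ}
    (hz : ‖z - x‖ ≤ R) (hB : ∀ y, ‖y - x‖ ≤ R → ‖iteratedFDeriv ℝ 2 f y‖ ≤ B) :
    ‖f z - f x - fderiv ℝ f x (z - x)‖ ≤ B * R * R := by
  have hR : 0 ≤ R := (norm_nonneg _).trans hz
  have hB0 : 0 ≤ B := (norm_nonneg _).trans (hB x (by simpa using hR))
  have hball : ∀ {y}, y ∈ Metric.closedBall x R ↔ ‖y - x‖ ≤ R := by
    intro y; rw [Metric.mem_closedBall, dist_eq_norm]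
  have hx : x ∈ Metric.closedBall x R := Metric.mem_closedBall_self hR
  have hDf : ∀ y ∈ Metric.closedBall x R, ‖fderiv ℝ f y - fderiv ℝ f x‖ ≤ B * R := by
    intro y hy
    calc ‖fderiv ℝ f y - fderiv ℝ f x‖ ≤ B * ‖y - x‖ :=
          (convex_closedBall x R).norm_image_sub_le_of_norm_fderiv_le
            (fun y _ => (hf.fderiv_right le_rfl).differentiable one_ne_zero y)
            (fun y hy => (norm_fderiv_fderiv f y).trans_le (hB y (hball.mp hy))) hx hy
      _ ≤ B * R := mul_le_mul_of_nonneg_left (hball.mp hy) hB0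
  calc ‖f z - f x - fderiv ℝ f x (z - x)‖ ≤ B * R * ‖z - x‖ :=
        (convex_closedBall x R).norm_image_sub_le_of_norm_fderiv_le'
          (fun y _ => hf.differentiable two_ne_zero y) hDf hx (hball.mpr hz)
    _ ≤ B * R * R := mul_le_mul_of_nonneg_left hz (mul_nonneg hB0 hR)

end Taylor

theorem norm_sum_smul_le_of_sum_eq_one {ι E : Type*} [NormedAddCommGroup E]
    [NormedSpace ℝ E] {s : Finset ι} {w : ι → ℝ} {v : ι → E} {ε : ℝ} (hw : ∀ i ∈ s, 0 ≤ w i)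
    (hw1 : ∑ i ∈ s, w i = 1) (hv : ∀ i ∈ s, w i ≠ 0 → ‖v i‖ ≤ ε) :
    ‖∑ i ∈ s, w i • v i‖ ≤ ε := by
  have hterm : ∀ i ∈ s, ‖w i • v i‖ ≤ w i * ε := by
    intro i hi
    rw [norm_smul, Real.norm_of_nonneg (hw i hi)]
    rcases eq_or_ne (w i) 0 with h0 | h0
    · simp [h0]
    · exact mul_le_mul_of_nonneg_left (hv i hi h0) (hw i hi)
  calc ‖∑ i ∈ s, w i • v i‖ ≤ ∑ i ∈ s, w i * ε := norm_sum_le_of_le s hterm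
    _ = ε := by rw [← sum_mul, hw1, one_mul]

theorem add_rpow_le_two_rpow_mul {a b r : ℝ} (ha : 0 ≤ a) (hb : 0 ≤ b) (hr : 0 ≤ r) :
    (a + b) ^ r ≤ 2 ^ r * (a ^ r + b ^ r) := by
  wlog hab : a ≤ b generalizing a b
  · simpa only [add_comm] using this hb ha (le_of_not_ge hab)
  calc (a + b) ^ r ≤ (2 * b) ^ r := Real.rpow_le_rpow (by linarith) (by linarith) hr
    _ = 2 ^ r * b ^ r := Real.mul_rpow zero_le_two hb
    _ ≤ 2 ^ r * (a ^ r + b ^ r) := by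
        gcongr
        exact le_add_of_nonneg_left (Real.rpow_nonneg ha r)

theorem one_add_add_rpow_le {a b r : ℝ} (ha : 0 ≤ a) (hb : 0 ≤ b) (hr : 0 ≤ r) :
    1 + (a + b) ^ r ≤ 2 ^ r * ((1 + a ^ r) * (1 + b ^ r)) := by
  have h2 : 1 ≤ (2 : ℝ) ^ r := Real.one_le_rpow one_le_two hr
  have hab : 0 ≤ a ^ r * b ^ r := mul_nonneg (Real.rpow_nonneg ha r) (Real.rpow_nonneg hb r)
  nlinarith [add_rpow_le_two_rpow_mul ha hb hr]

theorem one_add_mul_rpow_le {a b r : ℝ} (ha : 0 ≤ a) (hb : 0 ≤ b) :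
    1 + (a * b) ^ r ≤ (1 + a ^ r) * (1 + b ^ r) := by
  rw [Real.mul_rpow ha hb]
  nlinarith [Real.rpow_nonneg ha r, Real.rpow_nonneg hb r]

section Grid

variable {d : ℕ} {δ : ℝ}

theorem hatFn_nonneg (z x : EuclideanSpace ℝ (Fin d)) : 0 ≤ hatFn d δ z x :=
  prod_nonneg fun _ _ => le_max_left _ _

theorem hatFn_gridPt (hδ : 0 < δ) (k : Fin d → ℤ) (x : EuclideanSpace ℝ (Fin d)) :
    hatFn d δ (gridPt d δ k) x = ∏ i, tent (x i / δ - k i) := by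
  refine prod_congr rfl fun i _ => ?_
  have h : x i - gridPt d δ k i = (x i / δ - k i) * δ := by
    simp only [gridPt]
    field_simp
  rw [tent, h, abs_mul, abs_of_pos hδ, mul_div_cancel_right₀ _ hδ.ne']

variable {mlo Mhi : Fin d → ℤ} {x : EuclideanSpace ℝ (Fin d)}
  {F : Type*} [NormedAddCommGroup F] [NormedSpace ℝ F]

theorem boxProj_eq_self (hx : ∀ i, δ * mlo i ≤ x i ∧ x i ≤ δ * Mhi i) :
    boxProj d δ mlo Mhi x = x := by
  ext i
  exact (max_eq_right ((hx i).1.trans (le_min le_rfl (hx i).2))).trans (min_eq_left (hx i).2)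

theorem div_mem_Icc_of_mem_box (hδ : 0 < δ) (hx : ∀ i, δ * mlo i ≤ x i ∧ x i ≤ δ * Mhi i)
    (i : Fin d) : (mlo i : ℝ) ≤ x i / δ ∧ x i / δ ≤ Mhi i := by
  rw [le_div_iff₀ hδ, div_le_iff₀ hδ, mul_comm _ δ, mul_comm _ δ]
  exact hx i

theorem sum_hatFn_gridPt (hδ : 0 < δ) (hx : ∀ i, δ * mlo i ≤ x i ∧ x i ≤ δ * Mhi i) :
    ∑ k ∈ Icc mlo Mhi, hatFn d δ (gridPt d δ k) x = 1 := by
  rw [sum_congr rfl fun k _ => hatFn_gridPt hδ k x, Pi.Icc_eq,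
    ← prod_univ_sum _ fun i (n : ℤ) => tent (x i / δ - n)]
  exact prod_eq_one fun i _ =>
    sum_Icc_tent (div_mem_Icc_of_mem_box hδ hx i).1 (div_mem_Icc_of_mem_box hδ hx i).2

theorem sum_hatFn_gridPt_smul_sub (hδ : 0 < δ)
    (hx : ∀ i, δ * mlo i ≤ x i ∧ x i ≤ δ * Mhi i) :
    ∑ k ∈ Icc mlo Mhi, hatFn d δ (gridPt d δ k) x • (gridPt d δ k - x) = 0 := by
  ext j
  have hcoord : ∀ k : Fin d → ℤ, hatFn d δ (gridPt d δ k) x * (δ * k j - x j)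
      = δ * ((∏ i, tent (x i / δ - k i)) * ((k j : ℝ) - x j / δ)) := by
    intro k
    rw [hatFn_gridPt hδ]
    field_simp
  simp only [WithLp.ofLp_sum, Finset.sum_apply, PiLp.smul_apply, PiLp.sub_apply, smul_eq_mul,
    PiLp.zero_apply]
  simp_rw [show ∀ k, (gridPt d δ k) j = δ * k j from fun _ => rfl, hcoord, ← mul_sum,
    Pi.Icc_eq]
  rw [sum_piFinset_prod_mul_eq_zero _ (fun i (n : ℤ) => tent (x i / δ - n))
    (fun n : ℤ => (n : ℝ) - x j / δ) (j := j), mul_zero]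
  exact sum_Icc_tent_mul_sub (div_mem_Icc_of_mem_box hδ hx j).1
    (div_mem_Icc_of_mem_box hδ hx j).2

theorem norm_le_sqrt_mul_of_abs_le {v : EuclideanSpace ℝ (Fin d)} {c : ℝ} (hc : 0 ≤ c)
    (hv : ∀ i, |v i| ≤ c) : ‖v‖ ≤ √d * c := by
  rw [EuclideanSpace.norm_eq, ← Real.sqrt_sq hc, ← Real.sqrt_mul (Nat.cast_nonneg d)]
  refine Real.sqrt_le_sqrt ?_
  calc ∑ i, ‖v i‖ ^ 2 ≤ ∑ _i : Fin d, c ^ 2 :=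
        sum_le_sum fun i _ => pow_le_pow_left₀ (norm_nonneg _) (hv i) 2
    _ = d * c ^ 2 := by simp

theorem norm_gridPt_sub_le_of_hatFn_ne_zero (hδ : 0 < δ) {k : Fin d → ℤ}
    (h : hatFn d δ (gridPt d δ k) x ≠ 0) : ‖gridPt d δ k - x‖ ≤ √d * δ := by
  rw [hatFn_gridPt hδ, prod_ne_zero_iff] at h
  refine norm_le_sqrt_mul_of_abs_le hδ.le fun i => ?_
  have h1 := abs_lt_one_of_tent_ne_zero (h i (mem_univ i))
  have h2 : (gridPt d δ k - x) i = -δ * (x i / δ - k i) := by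
    simp only [PiLp.sub_apply, gridPt]
    field_simp
    ring
  rw [h2, abs_mul, abs_neg, abs_of_pos hδ]
  nlinarith

theorem interp_sub_eq_sum (hδ : 0 < δ)
    (hx : ∀ i, δ * mlo i ≤ x i ∧ x i ≤ δ * Mhi i) (φ : EuclideanSpace ℝ (Fin d) → F)
    (L : EuclideanSpace ℝ (Fin d) →L[ℝ] F) :
    interp d δ mlo Mhi φ x - φ x = ∑ k ∈ Icc mlo Mhi, hatFn d δ (gridPt d δ k) x •
      (φ (gridPt d δ k) - φ x - L (gridPt d δ k - x)) := by
  have hsplit : ∀ k,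
      hatFn d δ (gridPt d δ k) x • (φ (gridPt d δ k) - φ x - L (gridPt d δ k - x))
      = hatFn d δ (gridPt d δ k) x • φ (gridPt d δ k) - hatFn d δ (gridPt d δ k) x • φ x
        - L (hatFn d δ (gridPt d δ k) x • (gridPt d δ k - x)) := by
    intro k
    rw [smul_sub, smul_sub, map_smul]
  rw [sum_congr rfl fun k _ => hsplit k, sum_sub_distrib, sum_sub_distrib, ← sum_smul,
    ← map_sum, sum_hatFn_gridPt hδ hx, sum_hatFn_gridPt_smul_sub hδ hx, one_smul, map_zero,
    sub_zero, interp, boxProj_eq_self hx]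

theorem norm_interp_sub_le (hδ : 0 < δ)
    (hx : ∀ i, δ * mlo i ≤ x i ∧ x i ≤ δ * Mhi i) {φ : EuclideanSpace ℝ (Fin d) → F}
    (hφ : ContDiff ℝ 2 φ) {B : ℝ}
    (hB : ∀ y, ‖y - x‖ ≤ √d * δ → ‖iteratedFDeriv ℝ 2 φ y‖ ≤ B) :
    ‖interp d δ mlo Mhi φ x - φ x‖ ≤ B * (d * δ ^ 2) := by
  rw [interp_sub_eq_sum hδ hx φ (fderiv ℝ φ x)]
  refine norm_sum_smul_le_of_sum_eq_one (fun _ _ => hatFn_nonneg _ _)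
    (sum_hatFn_gridPt hδ hx) fun k _ hk => ?_
  calc _ ≤ B * (√d * δ) * (√d * δ) :=
        norm_sub_sub_fderiv_apply_le hφ (norm_gridPt_sub_le_of_hatFn_ne_zero hδ hk) hB
    _ = B * (d * δ ^ 2) := by
        rw [mul_assoc, mul_mul_mul_comm, Real.mul_self_sqrt (Nat.cast_nonneg d), sq]

end Grid

theorem interp_error_bound_general
    (d m : ℕ) (r' C₀ : ℝ) (hr' : 0 ≤ r') (hC₀ : 0 ≤ C₀) :
    ∃ C : ℝ, 0 ≤ C ∧
      ∀ φ : EuclideanSpace ℝ (Fin d) → EuclideanSpace ℝ (Fin m),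
        ContDiff ℝ 2 φ →
        (∀ x, ‖iteratedFDeriv ℝ 2 φ x‖ ≤ C₀ * (1 + ‖x‖ ^ r')) →
        ∀ δ : ℝ, 0 < δ →
        ∀ mlo Mhi : Fin d → ℤ, (∀ i, mlo i ≤ Mhi i) →
        ∀ x : EuclideanSpace ℝ (Fin d),
          (∀ i, δ * mlo i ≤ x i ∧ x i ≤ δ * Mhi i) →
          ‖interp d δ mlo Mhi φ x - φ x‖ / (1 + ‖x‖ ^ r') ≤ C * δ ^ 2 * (1 + δ ^ r') := by
  refine ⟨C₀ * d * 2 ^ r' * (1 + √d ^ r'), by positivity, ?_⟩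
  intro φ hφ hgrowth δ hδ mlo Mhi _ x hx
  have hR : 0 ≤ √d * δ := by positivity
  have hB : ∀ y, ‖y - x‖ ≤ √d * δ →
      ‖iteratedFDeriv ℝ 2 φ y‖ ≤ C₀ * (1 + (‖x‖ + √d * δ) ^ r') := by
    intro y hy
    have hy' : ‖y‖ ≤ ‖x‖ + √d * δ := by linarith [norm_le_norm_add_norm_sub' y x]
    grw [hgrowth y, hy']
  have hweight : 1 + (‖x‖ + √d * δ) ^ r'
      ≤ 2 ^ r' * (1 + √d ^ r') * ((1 + ‖x‖ ^ r') * (1 + δ ^ r')) :=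
    calc 1 + (‖x‖ + √d * δ) ^ r' ≤ 2 ^ r' * ((1 + ‖x‖ ^ r') * (1 + (√d * δ) ^ r')) :=
          one_add_add_rpow_le (norm_nonneg x) hR hr'
      _ ≤ 2 ^ r' * ((1 + ‖x‖ ^ r') * ((1 + √d ^ r') * (1 + δ ^ r'))) := by
          grw [one_add_mul_rpow_le (Real.sqrt_nonneg d) hδ.le]
      _ = 2 ^ r' * (1 + √d ^ r') * ((1 + ‖x‖ ^ r') * (1 + δ ^ r')) := by ring
  rw [div_le_iff₀ (by positivity)]
  calc ‖interp d δ mlo Mhi φ x - φ x‖ ≤ C₀ * (1 + (‖x‖ + √d * δ) ^ r') * (d * δ ^ 2) :=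
        norm_interp_sub_le hδ hx hφ hB
    _ ≤ C₀ * (2 ^ r' * (1 + √d ^ r') * ((1 + ‖x‖ ^ r') * (1 + δ ^ r'))) * (d * δ ^ 2) := by
        gcongr
    _ = C₀ * d * 2 ^ r' * (1 + √d ^ r') * δ ^ 2 * (1 + δ ^ r') * (1 + ‖x‖ ^ r') := by ring

/-- If `φ` is `C²` with `‖∇²φ(x)‖ ≤ C₀(1 + |x|^{r'})`, then there is a constant `C ≥ 0`
depending only on `d`, `m`, `r'` and `C₀` (not on the grid) such that for every mesh size
`δ > 0` and every box subgrid of `δℤ^d` with convex hull `Box`,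
`sup_{x∈Box} ‖Pφ(x) − φ(x)‖/(1 + |x|^{r'}) ≤ C δ² (1 + δ^{r'})`. -/
theorem interp_error_bound
    (d m : ℕ) (hd : 1 ≤ d) (r' C₀ : ℝ) (hr' : 0 ≤ r') (hC₀ : 0 ≤ C₀) :
    ∃ C : ℝ, 0 ≤ C ∧
      ∀ φ : EuclideanSpace ℝ (Fin d) → EuclideanSpace ℝ (Fin m),
        ContDiff ℝ 2 φ →
        (∀ x, ‖iteratedFDeriv ℝ 2 φ x‖ ≤ C₀ * (1 + ‖x‖ ^ r')) →
        ∀ δ : ℝ, 0 < δ →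
        ∀ mlo Mhi : Fin d → ℤ, (∀ i, mlo i ≤ Mhi i) →
        ∀ x : EuclideanSpace ℝ (Fin d),
          (∀ i, δ * mlo i ≤ x i ∧ x i ≤ δ * Mhi i) →
          ‖interp d δ mlo Mhi φ x - φ x‖ / (1 + ‖x‖ ^ r') ≤ C * δ ^ 2 * (1 + δ ^ r') :=
  interp_error_bound_general d m r' C₀ hr' hC₀
end
end

section
/- Let d ≥ 1, p ∈ (1, ∞), r ≥ 0 and θ > 0. Let M(dx) = c·(1 + |x|)^{−(pr+d+1)} dx be the probability measure on ℝ^d obtained by normalization (c > 0), and let γ_d denote the standard Gaussian measure on ℝ^d (density (2π)^{−d/2} e^{−|y|²/2}). Define c_p^p := (∫₀^∞ (max(t,1))^{(pr+d+1)/2} θ e^{−θt} dt) · (∫_{ℝ^d} (1 + |y|)^{pr+d+1} γ_d(dy)); then c_p < ∞. Moreover, for every measurable w : ℝ^d → ℝ^m satisfying ‖w(x)‖ ≤ C_w·(1 + |x|^r) for some C_w ≥ 0 and all x, one has ∫_{ℝ^d} ‖w(x)‖^p M(dx) < ∞ and ∫_{ℝ^d} [∫₀^∞ ∫_{ℝ^d}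 ‖w(x + √t · y)‖^p γ_d(dy) θ e^{−θt} dt] M(dx) ≤ c_p^p · ∫_{ℝ^d} ‖w(x)‖^p M(dx). (When X^x_t = x + W_t is a Brownian motion started at x and E ~ Exp(θ) is independent of W, the inner double integral equals E[‖w(X^x_E)‖^p], so this is the L^p-stability condition used for the contraction with constant c_p.) -/
open MeasureTheory Filter Asymptotics
open scoped ENNReal

/-! Peetre's inequality `(1 + |x|)^{-q} ≤ (1 + |a|)^q (1 + |x + a|)^{-q}` says that translating
by `a` multiplies `∫ f dM` by at most `(1 + |a|)^q`, and for `a = √t y` this factor is at most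
`max(t, 1)^{q/2} (1 + |y|)^q`. Integrating over `y ~ γ_d` and `t ~ Exp(θ)` by Tonelli gives the
inequality, with finite constants because Gaussian and exponential tails beat any power. The
exponent `q = pr + d + 1` makes `‖w‖^p (1 + |x|)^{-q} = O((1 + |x|)^{-(d+1)})` integrable. -/

section

variable {E : Type*} [NormedAddCommGroup E]

theorem one_add_norm_add_le_mul (x a : E) : 1 + ‖x + a‖ ≤ (1 + ‖a‖) * (1 + ‖x‖) := by
  nlinarith [norm_add_le x a, norm_nonneg x, norm_nonneg a]

theorem one_add_norm_rpow_neg_le {q : ℝ} (hq : 0 ≤ q) (x a : E) :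
    (1 + ‖x‖) ^ (-q) ≤ (1 + ‖a‖) ^ q * (1 + ‖x + a‖) ^ (-q) := by
  have hx : 0 < 1 + ‖x‖ := by positivity
  have hxa : 0 < 1 + ‖x + a‖ := by positivity
  rw [Real.rpow_neg hx.le, Real.rpow_neg hxa.le, ← div_eq_mul_inv,
    le_div_iff₀ (by positivity), inv_mul_eq_div, div_le_iff₀ (by positivity),
    ← Real.mul_rpow (by positivity) hx.le]
  exact Real.rpow_le_rpow hxa.le (one_add_norm_add_le_mul x a) hq

theorem one_add_norm_rpow_le_two_mul {r : ℝ} (hr : 0 ≤ r) (x : E) :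
    1 + ‖x‖ ^ r ≤ 2 * (1 + ‖x‖) ^ r := by
  have h1 : 1 ≤ (1 + ‖x‖) ^ r := Real.one_le_rpow (by linarith [norm_nonneg x]) hr
  have h2 : ‖x‖ ^ r ≤ (1 + ‖x‖) ^ r := Real.rpow_le_rpow (norm_nonneg x) (by linarith) hr
  linarith

end

theorem one_add_norm_sqrt_smul_rpow_le {E : Type*} [NormedAddCommGroup E] [NormedSpace ℝ E]
    {q : ℝ} (hq : 0 ≤ q) (t : ℝ) (y : E) :
    (1 + ‖√t • y‖) ^ q ≤ max t 1 ^ (q / 2) * (1 + ‖y‖) ^ q := by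
  have hs : √t ≤ √(max t 1) := Real.sqrt_le_sqrt (le_max_left t 1)
  have hs1 : 1 ≤ √(max t 1) := Real.one_le_sqrt.mpr (le_max_right t 1)
  have key : 1 + ‖√t • y‖ ≤ √(max t 1) * (1 + ‖y‖) := by
    rw [norm_smul, Real.norm_of_nonneg (Real.sqrt_nonneg t)]
    nlinarith [norm_nonneg y]
  calc (1 + ‖√t • y‖) ^ q ≤ (√(max t 1) * (1 + ‖y‖)) ^ q :=
        Real.rpow_le_rpow (by positivity) key hq
    _ = max t 1 ^ (q / 2) * (1 + ‖y‖) ^ q := by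
        rw [Real.mul_rpow (Real.sqrt_nonneg _) (by positivity), Real.sqrt_eq_rpow,
          ← Real.rpow_mul (by positivity), one_div_mul_eq_div]

theorem integrableOn_max_one_rpow_mul_exp_neg (k : ℝ) {θ : ℝ} (hθ : 0 < θ) :
    IntegrableOn (fun t => max t 1 ^ k * (θ * Real.exp (-θ * t))) (Set.Ioi 0) := by
  have hcont : Continuous fun t : ℝ => max t 1 ^ k * (θ * Real.exp (-θ * t)) :=
    ((continuous_id.max continuous_const).rpow_const fun t =>
      Or.inl (one_pos.trans_le (le_max_right t 1)).ne').mul (by fun_prop)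
  refine integrable_of_isBigO_exp_neg (half_pos hθ) hcont.continuousOn ?_
  have hmax : (fun t : ℝ => max t 1 ^ k) =ᶠ[atTop] fun t => t ^ k :=
    (eventually_ge_atTop 1).mono fun t ht => by simp only [max_eq_left ht]
  have hpow := (isLittleO_rpow_exp_pos_mul_atTop k (half_pos hθ)).isBigO
  have hexp : (fun t : ℝ => θ * Real.exp (-θ * t)) =O[atTop] fun t => Real.exp (-θ * t) :=
    isBigO_const_mul_self θ _ _
  refine ((hpow.congr' hmax.symm EventuallyEq.rfl).mul hexp).congr_right fun t => ?_
  rw [← Real.exp_add]; ring_nf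

theorem exp_neg_sq_div_two_mul_one_add_rpow_le {q s : ℝ} (hq : 0 ≤ q) (hs : 0 ≤ s) :
    Real.exp (-s ^ 2 / 2) * (1 + s) ^ q ≤ Real.exp (q ^ 2) * Real.exp (-(1 / 4) * s ^ 2) := by
  have h1 : (1 + s) ^ q ≤ Real.exp (s * q) := by
    rw [Real.exp_mul]
    exact Real.rpow_le_rpow (by positivity) (by linarith [Real.add_one_le_exp s]) hq
  calc Real.exp (-s ^ 2 / 2) * (1 + s) ^ q ≤ Real.exp (-s ^ 2 / 2) * Real.exp (s * q) := by gcongr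
    _ ≤ Real.exp (q ^ 2) * Real.exp (-(1 / 4) * s ^ 2) := by
        rw [← Real.exp_add, ← Real.exp_add, Real.exp_le_exp]
        nlinarith [sq_nonneg (s / 2 - q)]

theorem integrable_exp_neg_sq_norm_mul_one_add_norm_rpow {V : Type*} [NormedAddCommGroup V]
    [InnerProductSpace ℝ V] [FiniteDimensional ℝ V] [MeasurableSpace V] [BorelSpace V]
    {q : ℝ} (hq : 0 ≤ q) :
    Integrable fun y : V => Real.exp (-‖y‖ ^ 2 / 2) * (1 + ‖y‖) ^ q := by
  have hgauss : Integrable fun y : V => Real.exp (-(1 / 4) * ‖y‖ ^ 2) := by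
    simpa [Complex.norm_exp, ← Complex.ofReal_pow] using
      (GaussianFourier.integrable_cexp_neg_mul_sq_norm_add (V := V)
        (b := ((1 / 4 : ℝ) : ℂ)) (by norm_num) 0 0).norm
  refine (hgauss.const_mul (Real.exp (q ^ 2))).mono' (by fun_prop) (.of_forall fun y => ?_)
  rw [Real.norm_of_nonneg (by positivity)]
  exact exp_neg_sq_div_two_mul_one_add_rpow_le hq (norm_nonneg y)

theorem lintegral_one_add_norm_rpow_gaussian_lt_top {V : Type*} [NormedAddCommGroup V]
    [InnerProductSpace ℝ V] [FiniteDimensional ℝ V] [MeasurableSpace V] [BorelSpace V]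
    (κ : ℝ) {q : ℝ} (hq : 0 ≤ q) :
    ∫⁻ y, ENNReal.ofReal ((1 + ‖y‖) ^ q)
      ∂(volume : Measure V).withDensity (fun y => ENNReal.ofReal (κ * Real.exp (-‖y‖ ^ 2 / 2)))
      < ⊤ := by
  rw [lintegral_withDensity_eq_lintegral_mul_non_measurable _ (by fun_prop)
    (.of_forall fun _ => ENNReal.ofReal_lt_top)]
  have hmul : ∀ y : V, ENNReal.ofReal (κ * Real.exp (-‖y‖ ^ 2 / 2)) *
      ENNReal.ofReal ((1 + ‖y‖) ^ q) =
        ENNReal.ofReal (κ * (Real.exp (-‖y‖ ^ 2 / 2) * (1 + ‖y‖) ^ q)) := fun y => by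
    rw [← ENNReal.ofReal_mul' (by positivity), mul_assoc]
  simp only [Pi.mul_apply, hmul]
  exact ((integrable_exp_neg_sq_norm_mul_one_add_norm_rpow hq).const_mul κ).lintegral_lt_top

theorem lintegral_comp_add_right_withDensity_le {E : Type*} [NormedAddCommGroup E]
    [MeasurableSpace E] [BorelSpace E] (μ : Measure E) [μ.IsAddRightInvariant]
    {c q : ℝ} (hc : 0 ≤ c) (hq : 0 ≤ q) (f : E → ℝ≥0∞) (a : E) :
    ∫⁻ x, f (x + a) ∂μ.withDensity (fun x => ENNReal.ofReal (c * (1 + ‖x‖) ^ (-q))) ≤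
      ENNReal.ofReal ((1 + ‖a‖) ^ q) *
        ∫⁻ x, f x ∂μ.withDensity (fun x => ENNReal.ofReal (c * (1 + ‖x‖) ^ (-q))) := by
  set ρ : E → ℝ≥0∞ := fun x => ENNReal.ofReal (c * (1 + ‖x‖) ^ (-q))
  have hρ : Measurable ρ := by fun_prop
  have hρ_lt_top : ∀ᵐ x ∂μ, ρ x < ∞ := .of_forall fun _ => ENNReal.ofReal_lt_top
  have hρ_le : ∀ x, ρ x ≤ ENNReal.ofReal ((1 + ‖a‖) ^ q) * ρ (x + a) := fun x => by
    rw [← ENNReal.ofReal_mul (by positivity)]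
    refine ENNReal.ofReal_le_ofReal ?_
    calc c * (1 + ‖x‖) ^ (-q) ≤ c * ((1 + ‖a‖) ^ q * (1 + ‖x + a‖) ^ (-q)) :=
          mul_le_mul_of_nonneg_left (one_add_norm_rpow_neg_le hq x a) hc
      _ = _ := by ring
  simp only [lintegral_withDensity_eq_lintegral_mul_non_measurable μ hρ hρ_lt_top, Pi.mul_apply]
  calc ∫⁻ x, ρ x * f (x + a) ∂μ
      ≤ ∫⁻ x, ENNReal.ofReal ((1 + ‖a‖) ^ q) * (ρ (x + a) * f (x + a)) ∂μ :=
        lintegral_mono fun x => by rw [← mul_assoc]; gcongr; exact hρ_le x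
    _ = ENNReal.ofReal ((1 + ‖a‖) ^ q) * ∫⁻ x, ρ x * f x ∂μ := by
        rw [lintegral_const_mul' _ _ ENNReal.ofReal_ne_top,
          lintegral_add_right_eq_self (fun x => ρ x * f x) a]

theorem lintegral_norm_rpow_withDensity_lt_top {E F : Type*} [NormedAddCommGroup E]
    [NormedSpace ℝ E] [FiniteDimensional ℝ E] [MeasurableSpace E] [BorelSpace E]
    (μ : Measure E) [μ.IsAddHaarMeasure] [NormedAddCommGroup F] {f : E → F} {C p r c q : ℝ}
    (hC : 0 ≤ C) (hp : 0 ≤ p) (hr : 0 ≤ r) (hc : 0 ≤ c)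
    (hq : Module.finrank ℝ E + p * r < q) (hf : ∀ x, ‖f x‖ ≤ C * (1 + ‖x‖ ^ r)) :
    ∫⁻ x, ENNReal.ofReal (‖f x‖ ^ p)
      ∂μ.withDensity (fun x => ENNReal.ofReal (c * (1 + ‖x‖) ^ (-q))) < ⊤ := by
  have hbound : ∀ x, c * (1 + ‖x‖) ^ (-q) * ‖f x‖ ^ p ≤
      c * (2 * C) ^ p * (1 + ‖x‖) ^ (-(q - p * r)) := fun x => by
    have hx : 0 < 1 + ‖x‖ := by positivity
    have hfx : ‖f x‖ ≤ 2 * C * (1 + ‖x‖) ^ r :=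
      (hf x).trans <| by nlinarith [one_add_norm_rpow_le_two_mul hr x]
    have hfxp : ‖f x‖ ^ p ≤ (2 * C) ^ p * (1 + ‖x‖) ^ (p * r) := by
      rw [mul_comm p, Real.rpow_mul hx.le, ← Real.mul_rpow (by positivity) (by positivity)]
      exact Real.rpow_le_rpow (norm_nonneg _) hfx hp
    calc c * (1 + ‖x‖) ^ (-q) * ‖f x‖ ^ p
        ≤ c * (1 + ‖x‖) ^ (-q) * ((2 * C) ^ p * (1 + ‖x‖) ^ (p * r)) := by gcongr
      _ = c * (2 * C) ^ p * (1 + ‖x‖) ^ (-(q - p * r)) := by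
        rw [show -(q - p * r) = -q + p * r by ring, Real.rpow_add hx]; ring
  have hint : Integrable (fun x : E => c * (2 * C) ^ p * (1 + ‖x‖) ^ (-(q - p * r))) μ :=
    (integrable_one_add_norm (by linarith)).const_mul _
  rw [lintegral_withDensity_eq_lintegral_mul_non_measurable μ (by fun_prop)
    (.of_forall fun _ => ENNReal.ofReal_lt_top)]
  refine lt_of_le_of_lt (lintegral_mono fun x => ?_) hint.lintegral_lt_top
  rw [Pi.mul_apply, ← ENNReal.ofReal_mul (by positivity)]
  exact ENNReal.ofReal_le_ofReal (hbound x)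

theorem lintegral_lintegral_sqrt_smul_le {E : Type*} [NormedAddCommGroup E] [NormedSpace ℝ E]
    [MeasurableSpace E] [BorelSpace E] [SecondCountableTopology E]
    (M γ : Measure E) [SFinite M] [SFinite γ] (ν : Measure ℝ) [SFinite ν] {q : ℝ} (hq : 0 ≤ q)
    {f : E → ℝ≥0∞} (hf : Measurable f) {g : ℝ → ℝ≥0∞} (hg : Measurable g)
    (hM : ∀ a, ∫⁻ x, f (x + a) ∂M ≤ ENNReal.ofReal ((1 + ‖a‖) ^ q) * ∫⁻ x, f x ∂M) :
    ∫⁻ x, ∫⁻ t, (∫⁻ y, f (x + √t • y) ∂γ) * g t ∂ν ∂M ≤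
      (∫⁻ t, ENNReal.ofReal (max t 1 ^ (q / 2)) * g t ∂ν) *
        (∫⁻ y, ENNReal.ofReal ((1 + ‖y‖) ^ q) ∂γ) * ∫⁻ x, f x ∂M := by
  have hF : Measurable fun z : (E × ℝ) × E => f (z.1.1 + √z.1.2 • z.2) := by fun_prop
  set I := ∫⁻ x, f x ∂M
  calc ∫⁻ x, ∫⁻ t, (∫⁻ y, f (x + √t • y) ∂γ) * g t ∂ν ∂M
      = ∫⁻ t, (∫⁻ y, ∫⁻ x, f (x + √t • y) ∂M ∂γ) * g t ∂ν := by
        rw [lintegral_lintegral_swap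
          (hF.lintegral_prod_right'.mul (hg.comp measurable_snd)).aemeasurable]
        refine lintegral_congr fun t => ?_
        have hFt : Measurable fun z : E × E => f (z.1 + √t • z.2) := by fun_prop
        rw [lintegral_mul_const _ hFt.lintegral_prod_right',
          lintegral_lintegral_swap hFt.aemeasurable]
    _ ≤ ∫⁻ t, (∫⁻ y, ENNReal.ofReal (max t 1 ^ (q / 2)) *
          ENNReal.ofReal ((1 + ‖y‖) ^ q) * I ∂γ) * g t ∂ν := by
        gcongr with t y
        refine (hM _).trans ?_
        gcongr
        rw [← ENNReal.ofReal_mul (by positivity)]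
        exact ENNReal.ofReal_le_ofReal (one_add_norm_sqrt_smul_rpow_le hq t y)
    _ = ∫⁻ t, ENNReal.ofReal (max t 1 ^ (q / 2)) * g t *
          ((∫⁻ y, ENNReal.ofReal ((1 + ‖y‖) ^ q) ∂γ) * I) ∂ν := by
        refine lintegral_congr fun t => ?_
        rw [lintegral_mul_const _ (by fun_prop), lintegral_const_mul' _ _ ENNReal.ofReal_ne_top]
        ring
    _ = _ := by rw [lintegral_mul_const _ (by fun_prop), mul_assoc]

theorem lp_stability_exponential_time_general
    (d : ℕ) (p r θ : ℝ) (hp : 1 < p) (hr : 0 ≤ r) (hθ : 0 < θ)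
    (c : ℝ) (hc : 0 < c)
    (M : Measure (EuclideanSpace ℝ (Fin d)))
    (hM : M = volume.withDensity
      (fun x => ENNReal.ofReal (c * (1 + ‖x‖) ^ (-(p * r + d + 1)))))
    (γ : Measure (EuclideanSpace ℝ (Fin d)))
    (hγ : γ = volume.withDensity
      (fun y => ENNReal.ofReal ((2 * Real.pi) ^ (-(d : ℝ) / 2) * Real.exp (-‖y‖ ^ 2 / 2))))
    (m : ℕ) (w : EuclideanSpace ℝ (Fin d) → EuclideanSpace ℝ (Fin m))
    (hw : Measurable w)
    (Cw : ℝ) (hCw : 0 ≤ Cw) (hgrowth : ∀ x, ‖w x‖ ≤ Cw * (1 + ‖x‖ ^ r)) :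
    (∫⁻ t in Set.Ioi (0 : ℝ),
        ENNReal.ofReal ((max t 1) ^ ((p * r + d + 1) / 2) * (θ * Real.exp (-θ * t))) < ⊤) ∧
    (∫⁻ y, ENNReal.ofReal ((1 + ‖y‖) ^ (p * r + d + 1)) ∂γ < ⊤) ∧
    (∫⁻ x, ENNReal.ofReal (‖w x‖ ^ p) ∂M < ⊤) ∧
    (∫⁻ x, (∫⁻ t in Set.Ioi (0 : ℝ),
          (∫⁻ y, ENNReal.ofReal (‖w (x + Real.sqrt t • y)‖ ^ p) ∂γ) *
            ENNReal.ofReal (θ * Real.exp (-θ * t))) ∂M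
        ≤ (∫⁻ t in Set.Ioi (0 : ℝ),
            ENNReal.ofReal ((max t 1) ^ ((p * r + d + 1) / 2) * (θ * Real.exp (-θ * t)))) *
          (∫⁻ y, ENNReal.ofReal ((1 + ‖y‖) ^ (p * r + d + 1)) ∂γ) *
          (∫⁻ x, ENNReal.ofReal (‖w x‖ ^ p) ∂M)) := by
  subst hM hγ
  have hq : 0 ≤ p * r + d + 1 := by positivity
  refine ⟨(integrableOn_max_one_rpow_mul_exp_neg _ hθ).lintegral_lt_top,
    lintegral_one_add_norm_rpow_gaussian_lt_top _ hq,
    lintegral_norm_rpow_withDensity_lt_top volume hCw (by linarith) hr hc.le ?_ hgrowth, ?_⟩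
  · simp only [finrank_euclideanSpace_fin]
    linarith
  · have hsplit : ∀ t : ℝ, ENNReal.ofReal
        (max t 1 ^ ((p * r + d + 1) / 2) * (θ * Real.exp (-θ * t))) =
          ENNReal.ofReal (max t 1 ^ ((p * r + d + 1) / 2)) *
            ENNReal.ofReal (θ * Real.exp (-θ * t)) := fun t =>
      ENNReal.ofReal_mul (by positivity)
    simp only [hsplit]
    exact lintegral_lintegral_sqrt_smul_le _ _ _ hq (by fun_prop) (by fun_prop)
      (lintegral_comp_add_right_withDensity_le volume hc.le hq _)

/-- `L^p`-stability with respect to the weighted probability measure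
`M(dx) = c (1+|x|)^{−(pr+d+1)} dx` of the exponentially-randomized Brownian shift:
with `γ_d` the standard Gaussian on `ℝ^d` and `E ~ Exp(θ)` independent of the Brownian
motion, `E[‖w(x + W_E)‖^p] = ∫₀^∞ ∫ ‖w(x + √t y)‖^p γ_d(dy) θ e^{−θt} dt`, and
`∫ E[‖w(X^x_E)‖^p] M(dx) ≤ c_p^p ∫ ‖w(x)‖^p M(dx) < ∞`, with
`c_p^p = (∫₀^∞ (max(t,1))^{(pr+d+1)/2} θ e^{−θt} dt)(∫ (1+|y|)^{pr+d+1} γ_d(dy)) < ∞`. -/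
theorem lp_stability_exponential_time
    (d : ℕ) (hd : 1 ≤ d) (p r θ : ℝ) (hp : 1 < p) (hr : 0 ≤ r) (hθ : 0 < θ)
    (c : ℝ) (hc : 0 < c)
    (M : Measure (EuclideanSpace ℝ (Fin d)))
    (hM : M = volume.withDensity
      (fun x => ENNReal.ofReal (c * (1 + ‖x‖) ^ (-(p * r + d + 1)))))
    (hMprob : IsProbabilityMeasure M)
    (γ : Measure (EuclideanSpace ℝ (Fin d)))
    (hγ : γ = volume.withDensity
      (fun y => ENNReal.ofReal ((2 * Real.pi) ^ (-(d : ℝ) / 2) * Real.exp (-‖y‖ ^ 2 / 2))))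
    (m : ℕ) (w : EuclideanSpace ℝ (Fin d) → EuclideanSpace ℝ (Fin m))
    (hw : Measurable w)
    (Cw : ℝ) (hCw : 0 ≤ Cw) (hgrowth : ∀ x, ‖w x‖ ≤ Cw * (1 + ‖x‖ ^ r)) :
    (∫⁻ t in Set.Ioi (0 : ℝ),
        ENNReal.ofReal ((max t 1) ^ ((p * r + d + 1) / 2) * (θ * Real.exp (-θ * t))) < ⊤) ∧
    (∫⁻ y, ENNReal.ofReal ((1 + ‖y‖) ^ (p * r + d + 1)) ∂γ < ⊤) ∧
    (∫⁻ x, ENNReal.ofReal (‖w x‖ ^ p) ∂M < ⊤) ∧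
    (∫⁻ x, (∫⁻ t in Set.Ioi (0 : ℝ),
          (∫⁻ y, ENNReal.ofReal (‖w (x + Real.sqrt t • y)‖ ^ p) ∂γ) *
            ENNReal.ofReal (θ * Real.exp (-θ * t))) ∂M
        ≤ (∫⁻ t in Set.Ioi (0 : ℝ),
            ENNReal.ofReal ((max t 1) ^ ((p * r + d + 1) / 2) * (θ * Real.exp (-θ * t)))) *
          (∫⁻ y, ENNReal.ofReal ((1 + ‖y‖) ^ (p * r + d + 1)) ∂γ) *
          (∫⁻ x, ENNReal.ofReal (‖w x‖ ^ p) ∂M)) :=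
  lp_stability_exponential_time_general d p r θ hp hr hθ c hc M hM γ hγ m w hw Cw hCw hgrowth
end

section
/- Let d ≥ 1, p ∈ (1, ∞), r ≥ 0 and θ̃ > 0. Let M(dx) = c·(1 + |x|)^{−(pr+d+1)} dx be the probability measure on ℝ^d obtained by normalization (c > 0), and let γ_d denote the standard Gaussian measure on ℝ^d (density (2π)^{−d/2} e^{−|y|²/2}). Define c̃_p^p := (∫₀^∞ (max(t,1))^{(pr+d+1)/2} · t^{−1/2} √(θ̃/π) e^{−θ̃t} dt) · (∫_{ℝ^d} (1 + |y|)^{pr+d+1} γ_d(dy)); then c̃_p < ∞. Moreover, for every measurable w : ℝ^d → ℝ^m satisfying ‖w(x)‖ ≤ C_w·(1 + |x|^r) for some C_w ≥ 0 and all x, one has ∫_{ℝ^d} [∫₀^∞ ∫_{ℝ^d} ‖w(x + √t · y)‖^p γ_d(dy) · √(θ̃/(πt)) e^{−θ̃t} dt] M(dx) ≤ c̃_p^p · ∫_{ℝ^d} ‖w(x)‖^p M(dx) < ∞. (When X^x_t = x + W_t is a Brownian motion started at x and Ẽ ~ Γ(1/2, θ̃) is independent of W, the inner double integral equals E[‖w(X^x_{Ẽ})‖^p],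 so this is the L^p-stability condition used for the contraction with constant c̃_p.) -/
/-!
The density `c (1 + |x|)^(-q)` of `M`, `q = pr + d + 1`, satisfies Peetre's inequality
`(1 + |z - v|)^(-q) ≤ (1 + |v|)^q (1 + |z|)^(-q)`, so translating by `v` multiplies
`∫ g dM` by at most `(1 + |v|)^q`. For `v = √t y` this factor is at most
`max(t, 1)^(q/2) (1 + |y|)^q`, and Tonelli separates the `t`- and `y`-integrals into the two
factors of `c̃_p^p`. These are finite because the gamma and Gaussian densities beat every power,
and `∫ ‖w‖^p dM < ∞` because `‖w‖^p ≲ (1 + |x|)^(pr)` while `(1 + |x|)^(-(d+1))` is integrable.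
-/

open MeasureTheory
open scoped ENNReal
open Set Real Module

theorem Real.sqrt_div_mul_eq_rpow_neg_half_mul (a b : ℝ) {t : ℝ} (ht : 0 ≤ t) :
    √(a / (b * t)) = t ^ (-(1 : ℝ) / 2) * √(a / b) := by
  rw [← div_div, sqrt_div' _ ht, sqrt_eq_rpow t, neg_div, rpow_neg ht, div_eq_inv_mul]

theorem max_one_rpow_le_one_add_rpow {t : ℝ} (ht : 0 ≤ t) (a : ℝ) :
    max t 1 ^ a ≤ 1 + t ^ a := by
  rcases le_total t 1 with h | h
  · rw [max_eq_right h, one_rpow]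
    linarith [rpow_nonneg ht a]
  · rw [max_eq_left h]
    linarith

theorem max_sqrt_one_rpow (t q : ℝ) : max √t 1 ^ q = max t 1 ^ (q / 2) := by
  rw [← sqrt_one, ← Real.sqrt_monotone.map_max, sqrt_one, sqrt_eq_rpow,
    ← rpow_mul (by positivity)]
  ring_nf

theorem one_add_norm_sub_rpow_neg_le {E : Type*} [SeminormedAddCommGroup E] {q : ℝ} (hq : 0 ≤ q)
    (z v : E) : (1 + ‖z - v‖) ^ (-q) ≤ (1 + ‖v‖) ^ q * (1 + ‖z‖) ^ (-q) := by
  have key : 1 + ‖z‖ ≤ (1 + ‖v‖) * (1 + ‖z - v‖) := by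
    nlinarith [norm_le_norm_sub_add z v, norm_nonneg v, norm_nonneg (z - v)]
  calc (1 + ‖z - v‖) ^ (-q) = (1 + ‖v‖) ^ q * ((1 + ‖v‖) * (1 + ‖z - v‖)) ^ (-q) := by
        rw [mul_rpow (by positivity) (by positivity), ← mul_assoc, ← rpow_add (by positivity),
          add_neg_cancel, rpow_zero, one_mul]
    _ ≤ (1 + ‖v‖) ^ q * (1 + ‖z‖) ^ (-q) :=
        mul_le_mul_of_nonneg_left
          (rpow_le_rpow_of_nonpos (by positivity) key (neg_nonpos.mpr hq)) (by positivity)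

theorem one_add_rpow_le_two_mul_one_add_rpow {x : ℝ} (hx : 0 ≤ x) {r : ℝ} (hr : 0 ≤ r) :
    1 + x ^ r ≤ 2 * (1 + x) ^ r := by
  have h1 : 1 ≤ (1 + x) ^ r := one_le_rpow (by linarith) hr
  have h2 : x ^ r ≤ (1 + x) ^ r := by gcongr; linarith
  linarith

theorem one_add_rpow_mul_exp_neg_sq_div_two_le {x : ℝ} (hx : 0 ≤ x) {Q : ℝ} (hQ : 0 ≤ Q) :
    (1 + x) ^ Q * exp (-x ^ 2 / 2) ≤ exp (Q ^ 2 / 2) := by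
  have hlog : Q * log (1 + x) ≤ Q * x := by
    gcongr
    linarith [log_le_sub_one_of_pos (by positivity : 0 < 1 + x)]
  rw [rpow_def_of_pos (by positivity), ← exp_add, exp_le_exp]
  nlinarith [sq_nonneg (Q - x)]

theorem one_add_norm_smul_le {E : Type*} [SeminormedAddCommGroup E] [NormedSpace ℝ E]
    (s : ℝ) (y : E) : 1 + ‖s • y‖ ≤ max |s| 1 * (1 + ‖y‖) := by
  rw [norm_smul, norm_eq_abs]
  nlinarith [le_max_left |s| 1, le_max_right |s| 1, norm_nonneg y]

section Shift

variable {E : Type*} [NormedAddCommGroup E] [MeasurableSpace E] [BorelSpace E]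

theorem lintegral_comp_add_withDensity_le (μ : Measure E) [μ.IsAddRightInvariant] {c q : ℝ}
    (hc : 0 ≤ c) (hq : 0 ≤ q) {g : E → ℝ≥0∞} (hg : Measurable g) (v : E) :
    ∫⁻ x, g (x + v) ∂μ.withDensity (fun x => ENNReal.ofReal (c * (1 + ‖x‖) ^ (-q))) ≤
      ENNReal.ofReal ((1 + ‖v‖) ^ q) *
        ∫⁻ x, g x ∂μ.withDensity (fun x => ENNReal.ofReal (c * (1 + ‖x‖) ^ (-q))) := by
  set D : E → ℝ≥0∞ := fun x => ENNReal.ofReal (c * (1 + ‖x‖) ^ (-q))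
  have hD : Measurable D := by fun_prop
  rw [lintegral_withDensity_eq_lintegral_mul _ hD (by fun_prop : Measurable fun x => g (x + v)),
    lintegral_withDensity_eq_lintegral_mul _ hD hg, ← lintegral_const_mul' _ _ ENNReal.ofReal_ne_top]
  calc ∫⁻ x, D x * g (x + v) ∂μ = ∫⁻ x, D (x - v) * g x ∂μ := by
        simpa using lintegral_add_right_eq_self (μ := μ) (fun x => D (x - v) * g x) v
    _ ≤ ∫⁻ x, ENNReal.ofReal ((1 + ‖v‖) ^ q) * (D x * g x) ∂μ := by
        refine lintegral_mono fun x => ?_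
        rw [← mul_assoc, ← ENNReal.ofReal_mul (by positivity)]
        gcongr ?_ * _
        refine ENNReal.ofReal_le_ofReal ?_
        calc c * (1 + ‖x - v‖) ^ (-q) ≤ c * ((1 + ‖v‖) ^ q * (1 + ‖x‖) ^ (-q)) := by
              gcongr; exact one_add_norm_sub_rpow_neg_le hq x v
          _ = (1 + ‖v‖) ^ q * (c * (1 + ‖x‖) ^ (-q)) := by ring

variable [NormedSpace ℝ E] [SecondCountableTopology E] (M γ : Measure E) [SFinite M] [SFinite γ]
  {g : E → ℝ≥0∞} (hg : Measurable g) {q : ℝ} (hq : 0 ≤ q)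
  (hshift : ∀ v, ∫⁻ x, g (x + v) ∂M ≤ ENNReal.ofReal ((1 + ‖v‖) ^ q) * ∫⁻ x, g x ∂M)
include hg hq hshift

theorem lintegral_lintegral_comp_add_smul_le (s : ℝ) :
    ∫⁻ x, ∫⁻ y, g (x + s • y) ∂γ ∂M ≤ ENNReal.ofReal (max |s| 1 ^ q) *
      (∫⁻ y, ENNReal.ofReal ((1 + ‖y‖) ^ q) ∂γ) * ∫⁻ x, g x ∂M := by
  have hrhs : ENNReal.ofReal (max |s| 1 ^ q) * (∫⁻ y, ENNReal.ofReal ((1 + ‖y‖) ^ q) ∂γ) *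
      ∫⁻ x, g x ∂M =
      ∫⁻ y, ENNReal.ofReal (max |s| 1 ^ q) * ENNReal.ofReal ((1 + ‖y‖) ^ q) * ∫⁻ x, g x ∂M ∂γ := by
    rw [lintegral_mul_const _ (by fun_prop), lintegral_const_mul _ (by fun_prop)]
  rw [lintegral_lintegral_swap (by fun_prop), hrhs]
  refine lintegral_mono fun y => (hshift (s • y)).trans ?_
  rw [← ENNReal.ofReal_mul (by positivity)]
  gcongr
  calc (1 + ‖s • y‖) ^ q ≤ (max |s| 1 * (1 + ‖y‖)) ^ q := by
        gcongr; exact one_add_norm_smul_le s y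
    _ = _ := mul_rpow (by positivity) (by positivity)

theorem lintegral_lintegral_lintegral_comp_add_sqrt_smul_le (ν : Measure ℝ) [SFinite ν]
    {ρ : ℝ → ℝ≥0∞} (hρ : Measurable ρ) :
    ∫⁻ x, ∫⁻ t, (∫⁻ y, g (x + √t • y) ∂γ) * ρ t ∂ν ∂M ≤
      (∫⁻ t, ENNReal.ofReal (max t 1 ^ (q / 2)) * ρ t ∂ν) *
        (∫⁻ y, ENNReal.ofReal ((1 + ‖y‖) ^ q) ∂γ) * ∫⁻ x, g x ∂M := by
  set B := ∫⁻ y, ENNReal.ofReal ((1 + ‖y‖) ^ q) ∂γ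
  set N := ∫⁻ x, g x ∂M
  calc _ = ∫⁻ t, (∫⁻ x, ∫⁻ y, g (x + √t • y) ∂γ ∂M) * ρ t ∂ν := by
        rw [lintegral_lintegral_swap (by fun_prop)]
        exact lintegral_congr fun t => lintegral_mul_const _ (by fun_prop)
    _ ≤ ∫⁻ t, ENNReal.ofReal (max t 1 ^ (q / 2)) * ρ t * (B * N) ∂ν := by
        refine lintegral_mono fun t => ?_
        calc _ ≤ ENNReal.ofReal (max |√t| 1 ^ q) * B * N * ρ t := by
              gcongr; exact lintegral_lintegral_comp_add_smul_le M γ hg hq hshift √t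
          _ = _ := by rw [abs_of_nonneg (sqrt_nonneg t), max_sqrt_one_rpow]; ring
    _ = _ := by rw [lintegral_mul_const _ (by fun_prop), mul_assoc]

end Shift

theorem integrableOn_max_one_rpow_mul_rpow_mul_exp_neg_mul {a s θ : ℝ} (hs : -1 < s)
    (has : -1 < a + s) (hθ : 0 < θ) :
    IntegrableOn (fun t : ℝ => max t 1 ^ a * (t ^ s * exp (-θ * t))) (Ioi 0) := by
  have hgamma (b : ℝ) (hb : -1 < b) :
      IntegrableOn (fun t : ℝ => t ^ b * exp (-θ * t)) (Ioi 0) := by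
    simpa using integrableOn_rpow_mul_exp_neg_mul_rpow hb one_pos hθ
  refine ((hgamma s hs).add (hgamma (a + s) has)).mono' (by fun_prop) ?_
  filter_upwards [ae_restrict_mem measurableSet_Ioi] with t (ht : 0 < t)
  calc ‖max t 1 ^ a * (t ^ s * exp (-θ * t))‖
      = max t 1 ^ a * (t ^ s * exp (-θ * t)) := norm_of_nonneg (by positivity)
    _ ≤ (1 + t ^ a) * (t ^ s * exp (-θ * t)) := by
        gcongr
        exact max_one_rpow_le_one_add_rpow ht.le a
    _ = t ^ s * exp (-θ * t) + t ^ (a + s) * exp (-θ * t) := by rw [rpow_add ht]; ring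

section Integrability

variable {E : Type*} [NormedAddCommGroup E] [NormedSpace ℝ E] [FiniteDimensional ℝ E]
  [MeasurableSpace E] [BorelSpace E] (μ : Measure E) [μ.IsAddHaarMeasure]

theorem lintegral_one_add_norm_rpow_withDensity_exp_neg_sq_lt_top (a : ℝ) {q : ℝ} (hq : 0 ≤ q) :
    ∫⁻ y, ENNReal.ofReal ((1 + ‖y‖) ^ q)
      ∂μ.withDensity (fun y => ENNReal.ofReal (a * exp (-‖y‖ ^ 2 / 2))) < ⊤ := by
  set n : ℝ := finrank ℝ E + 1
  have hint : Integrable (fun y : E => |a| * exp ((q + n) ^ 2 / 2) * (1 + ‖y‖) ^ (-n)) μ :=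
    (integrable_one_add_norm (by simp [n])).const_mul _
  rw [lintegral_withDensity_eq_lintegral_mul _ (by fun_prop) (by fun_prop)]
  refine lt_of_le_of_lt (lintegral_mono fun y => ?_) hint.lintegral_lt_top
  rw [Pi.mul_apply, ← ENNReal.ofReal_mul' (by positivity)]
  refine ENNReal.ofReal_le_ofReal ?_
  have hy : 0 < 1 + ‖y‖ := by positivity
  have hsplit : (1 + ‖y‖) ^ q = (1 + ‖y‖) ^ (q + n) * (1 + ‖y‖) ^ (-n) := by
    rw [← rpow_add hy, add_neg_cancel_right]
  calc a * exp (-‖y‖ ^ 2 / 2) * (1 + ‖y‖) ^ q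
      ≤ |a| * exp (-‖y‖ ^ 2 / 2) * (1 + ‖y‖) ^ q := by gcongr; exact le_abs_self a
    _ = |a| * ((1 + ‖y‖) ^ (q + n) * exp (-‖y‖ ^ 2 / 2)) * (1 + ‖y‖) ^ (-n) := by
        rw [hsplit]; ring
    _ ≤ |a| * exp ((q + n) ^ 2 / 2) * (1 + ‖y‖) ^ (-n) := by
        gcongr
        exact one_add_rpow_mul_exp_neg_sq_div_two_le (norm_nonneg y) (by positivity)

theorem lintegral_rpow_norm_withDensity_lt_top {F : Type*} [NormedAddCommGroup F] {f : E → F}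
    {C r p c q : ℝ} (hC : 0 ≤ C) (hr : 0 ≤ r) (hp : 0 ≤ p) (hc : 0 ≤ c)
    (hf : ∀ x, ‖f x‖ ≤ C * (1 + ‖x‖ ^ r)) (hq : finrank ℝ E + p * r < q) :
    ∫⁻ x, ENNReal.ofReal (‖f x‖ ^ p)
      ∂μ.withDensity (fun x => ENNReal.ofReal (c * (1 + ‖x‖) ^ (-q))) < ⊤ := by
  have hint : Integrable (fun x : E => c * (2 * C) ^ p * (1 + ‖x‖) ^ (-(q - p * r))) μ :=
    (integrable_one_add_norm (by linarith)).const_mul _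
  rw [lintegral_withDensity_eq_lintegral_mul_non_measurable _ (by fun_prop)
    (ae_of_all _ fun _ => ENNReal.ofReal_lt_top)]
  refine lt_of_le_of_lt (lintegral_mono fun x => ?_) hint.lintegral_lt_top
  rw [Pi.mul_apply, ← ENNReal.ofReal_mul' (by positivity)]
  refine ENNReal.ofReal_le_ofReal ?_
  have hx : 0 < 1 + ‖x‖ := by positivity
  have hfx : ‖f x‖ ^ p ≤ (2 * C) ^ p * (1 + ‖x‖) ^ (p * r) :=
    calc ‖f x‖ ^ p ≤ (C * (2 * (1 + ‖x‖) ^ r)) ^ p := by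
          gcongr
          exact (hf x).trans
            (by gcongr; exact one_add_rpow_le_two_mul_one_add_rpow (norm_nonneg x) hr)
      _ = (2 * C) ^ p * (1 + ‖x‖) ^ (p * r) := by
          rw [mul_rpow hC (by positivity), mul_rpow zero_le_two (by positivity),
            mul_rpow zero_le_two hC, ← rpow_mul hx.le, mul_comm r p]
          ring
  calc c * (1 + ‖x‖) ^ (-q) * ‖f x‖ ^ p
      ≤ c * (1 + ‖x‖) ^ (-q) * ((2 * C) ^ p * (1 + ‖x‖) ^ (p * r)) := by gcongr
    _ = c * (2 * C) ^ p * (1 + ‖x‖) ^ (-(q - p * r)) := by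
        rw [neg_sub, sub_eq_neg_add, rpow_add hx]
        ring

end Integrability

theorem lp_stability_gamma_time_general
    (d : ℕ) (p r θ' : ℝ) (hp : 1 < p) (hr : 0 ≤ r) (hθ' : 0 < θ')
    (c : ℝ) (hc : 0 < c)
    (M : Measure (EuclideanSpace ℝ (Fin d)))
    (hM : M = volume.withDensity
      (fun x => ENNReal.ofReal (c * (1 + ‖x‖) ^ (-(p * r + d + 1)))))
    (γ : Measure (EuclideanSpace ℝ (Fin d)))
    (hγ : γ = volume.withDensity
      (fun y => ENNReal.ofReal ((2 * Real.pi) ^ (-(d : ℝ) / 2) * Real.exp (-‖y‖ ^ 2 / 2))))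
    (m : ℕ) (w : EuclideanSpace ℝ (Fin d) → EuclideanSpace ℝ (Fin m))
    (hw : Measurable w)
    (Cw : ℝ) (hCw : 0 ≤ Cw) (hgrowth : ∀ x, ‖w x‖ ≤ Cw * (1 + ‖x‖ ^ r)) :
    (∫⁻ t in Set.Ioi (0 : ℝ),
        ENNReal.ofReal ((max t 1) ^ ((p * r + d + 1) / 2) *
          (t ^ (-(1 : ℝ) / 2) * Real.sqrt (θ' / Real.pi) * Real.exp (-θ' * t))) < ⊤) ∧
    (∫⁻ y, ENNReal.ofReal ((1 + ‖y‖) ^ (p * r + d + 1)) ∂γ < ⊤) ∧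
    (∫⁻ x, ENNReal.ofReal (‖w x‖ ^ p) ∂M < ⊤) ∧
    (∫⁻ x, (∫⁻ t in Set.Ioi (0 : ℝ),
          (∫⁻ y, ENNReal.ofReal (‖w (x + Real.sqrt t • y)‖ ^ p) ∂γ) *
            ENNReal.ofReal (Real.sqrt (θ' / (Real.pi * t)) * Real.exp (-θ' * t))) ∂M
        ≤ (∫⁻ t in Set.Ioi (0 : ℝ),
            ENNReal.ofReal ((max t 1) ^ ((p * r + d + 1) / 2) *
              (t ^ (-(1 : ℝ) / 2) * Real.sqrt (θ' / Real.pi) * Real.exp (-θ' * t)))) *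
          (∫⁻ y, ENNReal.ofReal ((1 + ‖y‖) ^ (p * r + d + 1)) ∂γ) *
          (∫⁻ x, ENNReal.ofReal (‖w x‖ ^ p) ∂M)) := by
  subst hM hγ
  have hp0 : 0 ≤ p := by linarith
  have hq : 0 ≤ p * r + d + 1 := by positivity
  have hg : Measurable fun x => ENNReal.ofReal (‖w x‖ ^ p) := by fun_prop
  refine ⟨?_, lintegral_one_add_norm_rpow_withDensity_exp_neg_sq_lt_top _ _ hq,
    lintegral_rpow_norm_withDensity_lt_top _ hCw hr hp0 hc.le hgrowth (by simp; linarith), ?_⟩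
  · have hint := (integrableOn_max_one_rpow_mul_rpow_mul_exp_neg_mul (a := (p * r + d + 1) / 2)
      (s := -(1 : ℝ) / 2) (by norm_num) (by linarith) hθ').const_mul √(θ' / π)
    exact IntegrableOn.setLIntegral_lt_top <|
      IntegrableOn.congr_fun hint (fun t _ => by ring) measurableSet_Ioi
  · refine (lintegral_lintegral_lintegral_comp_add_sqrt_smul_le _ _ hg hq
      (lintegral_comp_add_withDensity_le _ hc.le hq hg) _ (by fun_prop)).trans_eq ?_
    congr 2
    refine setLIntegral_congr_fun measurableSet_Ioi fun t ht => ?_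
    rw [← ENNReal.ofReal_mul (by positivity), sqrt_div_mul_eq_rpow_neg_half_mul _ _ ht.le]

/-- `L^p`-stability with respect to the weighted probability measure
`M(dx) = c (1+|x|)^{−(pr+d+1)} dx` of the Gamma-randomized Brownian shift:
with `γ_d` the standard Gaussian on `ℝ^d` and `Ẽ ~ Γ(1/2, θ̃)` (density
`√(θ̃/π) t^{−1/2} e^{−θ̃t}`) independent of the Brownian motion,
`E[‖w(x + W_Ẽ)‖^p] = ∫₀^∞ ∫ ‖w(x + √t y)‖^p γ_d(dy) √(θ̃/(πt)) e^{−θ̃t} dt`, and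
`∫ E[‖w(X^x_Ẽ)‖^p] M(dx) ≤ c̃_p^p ∫ ‖w(x)‖^p M(dx) < ∞`, with
`c̃_p^p = (∫₀^∞ (max(t,1))^{(pr+d+1)/2} t^{−1/2} √(θ̃/π) e^{−θ̃t} dt)
          (∫ (1+|y|)^{pr+d+1} γ_d(dy)) < ∞`. -/
theorem lp_stability_gamma_time
    (d : ℕ) (hd : 1 ≤ d) (p r θ' : ℝ) (hp : 1 < p) (hr : 0 ≤ r) (hθ' : 0 < θ')
    (c : ℝ) (hc : 0 < c)
    (M : Measure (EuclideanSpace ℝ (Fin d)))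
    (hM : M = volume.withDensity
      (fun x => ENNReal.ofReal (c * (1 + ‖x‖) ^ (-(p * r + d + 1)))))
    (hMprob : IsProbabilityMeasure M)
    (γ : Measure (EuclideanSpace ℝ (Fin d)))
    (hγ : γ = volume.withDensity
      (fun y => ENNReal.ofReal ((2 * Real.pi) ^ (-(d : ℝ) / 2) * Real.exp (-‖y‖ ^ 2 / 2))))
    (m : ℕ) (w : EuclideanSpace ℝ (Fin d) → EuclideanSpace ℝ (Fin m))
    (hw : Measurable w)
    (Cw : ℝ) (hCw : 0 ≤ Cw) (hgrowth : ∀ x, ‖w x‖ ≤ Cw * (1 + ‖x‖ ^ r)) :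
    (∫⁻ t in Set.Ioi (0 : ℝ),
        ENNReal.ofReal ((max t 1) ^ ((p * r + d + 1) / 2) *
          (t ^ (-(1 : ℝ) / 2) * Real.sqrt (θ' / Real.pi) * Real.exp (-θ' * t))) < ⊤) ∧
    (∫⁻ y, ENNReal.ofReal ((1 + ‖y‖) ^ (p * r + d + 1)) ∂γ < ⊤) ∧
    (∫⁻ x, ENNReal.ofReal (‖w x‖ ^ p) ∂M < ⊤) ∧
    (∫⁻ x, (∫⁻ t in Set.Ioi (0 : ℝ),
          (∫⁻ y, ENNReal.ofReal (‖w (x + Real.sqrt t • y)‖ ^ p) ∂γ) *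
            ENNReal.ofReal (Real.sqrt (θ' / (Real.pi * t)) * Real.exp (-θ' * t))) ∂M
        ≤ (∫⁻ t in Set.Ioi (0 : ℝ),
            ENNReal.ofReal ((max t 1) ^ ((p * r + d + 1) / 2) *
              (t ^ (-(1 : ℝ) / 2) * Real.sqrt (θ' / Real.pi) * Real.exp (-θ' * t)))) *
          (∫⁻ y, ENNReal.ofReal ((1 + ‖y‖) ^ (p * r + d + 1)) ∂γ) *
          (∫⁻ x, ENNReal.ofReal (‖w x‖ ^ p) ∂M)) :=
  lp_stability_gamma_time_general d p r θ' hp hr hθ' c hc M hM γ hγ m w hw Cw hCw hgrowth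
end
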